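/- arXiv:2512.00467 — 2 statements merged into one kernel-verified Lean document; each statement's English description precedes it below -/
import Mathlib

section
/- For the velocity coordination system in ℝ^m, the minimal convex hull Ξ(t) of the set of agent states {v_1(t),…,v_n(t)} is non-expanding: for all t ≥ 0 and δ > 0, Ξ(t+δ) ⊆ Ξ(t). -/
open Finset Filter Topology Set

/-!
Fix a continuous linear functional `f`. Along the flow, the largest value `max_j f (v_j)` cannot
increase: an agent `i` realising the maximum is pulled towards its neighbours `j`, each of which
has `f (v_j) ≤ f (v_i)`, with nonnegative weights `g(‖v_i - v_j‖) / ‖v_i - v_j‖`, so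
`d/dt f (v_i) ≤ 0`. Since a point lies in the convex hull of finitely many points as soon as no
functional separates it from them (Hahn–Banach), every later state lies in `Ξ(t)`.
-/

theorem eventually_nhdsGT_lt_add_mul_sub_of_hasDerivAt {u : ℝ → ℝ} {u' x M r : ℝ}
    (hu : HasDerivAt u u' x) (hM : u x ≤ M) (hu' : u x = M → u' ≤ 0) (hr : 0 < r) :
    ∀ᶠ z in 𝓝[>] x, u z < M + r * (z - x) := by
  rcases hM.eq_or_lt with hxM | hxM
  · have hslope : ∀ᶠ z in 𝓝[>] x, slope u x z < r :=
      ((hasDerivAt_iff_tendsto_slope.1 hu).mono_left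
        (nhdsWithin_mono x fun z hz => ne_of_gt hz)).eventually_lt_const
        ((hu' hxM).trans_lt hr)
    filter_upwards [hslope, self_mem_nhdsWithin] with z hz hxz
    rw [slope_def_field, div_lt_iff₀ (sub_pos.2 hxz)] at hz
    linarith
  · filter_upwards [nhdsWithin_le_nhds (hu.continuousAt.eventually_lt_const hxM),
      self_mem_nhdsWithin] with z hz hxz
    nlinarith [mul_pos hr (sub_pos.2 hxz)]

theorem Finset.antitone_sup'_of_hasDerivAt {ι : Type*} (s : Finset ι) (hs : s.Nonempty)
    {f f' : ι → ℝ → ℝ} (hf : ∀ i x, HasDerivAt (f i) (f' i x) x)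
    (hmax : ∀ x, ∀ i ∈ s, (∀ j ∈ s, f j x ≤ f i x) → f' i x ≤ 0) :
    Antitone fun x => s.sup' hs fun i => f i x := by
  intro a b hab
  set φ : ℝ → ℝ := fun x => s.sup' hs fun i => f i x
  have hφ : Continuous φ := continuous_iff_continuousAt.2 fun x =>
    ContinuousAt.finset_sup'_apply hs fun i _ => (hf i x).continuousAt
  refine image_le_of_liminf_slope_right_le_deriv_boundary (B := fun _ => φ a) (B' := fun _ => 0)
    hφ.continuousOn le_rfl continuousOn_const
    (fun x _ => hasDerivWithinAt_const x _ _) ?_ ⟨hab, le_rfl⟩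
  intro x _ r hr
  have hbelow : ∀ᶠ z in 𝓝[>] x, ∀ i ∈ s, f i z < φ x + r * (z - x) :=
    (eventually_all_finset s).2 fun i hi =>
      eventually_nhdsGT_lt_add_mul_sub_of_hasDerivAt (hf i x) (le_sup' (fun k => f k x) hi)
        (fun hix => hmax x i hi fun j hj => hix ▸ le_sup' (fun k => f k x) hj) hr
  refine Eventually.frequently ?_
  filter_upwards [hbelow, self_mem_nhdsWithin] with z hz hxz
  rw [slope_def_field, div_lt_iff₀ (sub_pos.2 hxz)]
  have : φ z < φ x + r * (z - x) := (sup'_lt_iff hs).2 hz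
  linarith

theorem convexHull_range_subset_of_forall_exists_le {ι κ E : Type*} [Finite κ]
    [NormedAddCommGroup E] [NormedSpace ℝ E] {w : ι → E} {p : κ → E}
    (h : ∀ (f : StrongDual ℝ E) (i : ι), ∃ j, f (w i) ≤ f (p j)) :
    convexHull ℝ (range w) ⊆ convexHull ℝ (range p) := by
  refine convexHull_min ?_ (convex_convexHull ℝ _)
  rintro _ ⟨i, rfl⟩
  by_contra hi
  obtain ⟨f, c, hp, hwi⟩ := geometric_hahn_banach_closed_point (convex_convexHull ℝ _)
    ((finite_range p).isClosed_convexHull (𝕜 := ℝ)) hi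
  obtain ⟨j, hj⟩ := h f i
  linarith [hp _ (subset_convexHull ℝ _ (mem_range_self j))]

theorem apply_sum_smul_sub_nonpos_of_isMax {ι E : Type*} [NormedAddCommGroup E]
    [NormedSpace ℝ E] (f : StrongDual ℝ E) (x : ι → E) (S : Finset ι) (c : ι → ℝ)
    (hc : ∀ j ∈ S, 0 ≤ c j) {i : ι} (hi : ∀ j ∈ S, f (x j) ≤ f (x i)) :
    f (∑ j ∈ S, (-c j) • (x i - x j)) ≤ 0 := by
  simp only [map_sum, map_smul, map_sub, smul_eq_mul, neg_mul]
  exact sum_nonpos fun j hj => neg_nonpos.2 (mul_nonneg (hc j hj) (sub_nonneg.2 (hi j hj)))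

theorem div_nonneg_of_forall_pos_imp_pos {g : ℝ → ℝ} (hg : ∀ y, 0 < y → 0 < g y) {y : ℝ}
    (hy : 0 ≤ y) : 0 ≤ g y / y := by
  rcases hy.eq_or_lt with rfl | hy
  · rw [div_zero]
  · exact (div_pos (hg y hy) hy).le

theorem convex_hull_nonexpanding_general
    (m n : ℕ)
    (v : ℝ → Fin n → EuclideanSpace ℝ (Fin m))
    (N : ℝ → Fin n → Finset (Fin n))
    (g : Fin n → Fin n → ℝ → ℝ)
    (hgpos : ∀ i j y, 0 < y → 0 < g i j y)
    (hdyn : ∀ i t, HasDerivAt (fun s => v s i)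
      (∑ j ∈ N t i,
        (-(g i j ‖v t i - v t j‖ / ‖v t i - v t j‖)) • (v t i - v t j)) t) :
    ∀ t ≥ (0 : ℝ), ∀ δ > (0 : ℝ),
      convexHull ℝ (Set.range (v (t + δ))) ⊆ convexHull ℝ (Set.range (v t)) := by
  intro t _ δ hδ
  refine convexHull_range_subset_of_forall_exists_le fun f i => ?_
  have hne : (univ : Finset (Fin n)).Nonempty := ⟨i, mem_univ i⟩
  have hmax_antitone : Antitone fun s => univ.sup' hne fun j => f (v s j) :=
    univ.antitone_sup'_of_hasDerivAt hne (fun j s => f.hasFDerivAt.comp_hasDerivAt s (hdyn j s))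
      fun s j _ hj => apply_sum_smul_sub_nonpos_of_isMax f (v s) (N s j) _
        (fun k _ => div_nonneg_of_forall_pos_imp_pos (hgpos j k) (norm_nonneg _))
        fun k _ => hj k (mem_univ k)
  obtain ⟨j, -, hj⟩ := exists_mem_eq_sup' hne fun j => f (v t j)
  exact ⟨j, (le_sup' (fun k => f (v (t + δ) k)) (mem_univ i)).trans
    ((hmax_antitone (by linarith)).trans_eq hj)⟩

/-- For the velocity coordination system in `ℝ^m`, the convex hull of the agents'
states is non-expanding: for `t ≥ 0` and `δ > 0`, `Ξ(t+δ) ⊆ Ξ(t)`.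
(The coupling term is interpreted as `0` when `vᵢ = vⱼ`, which is Lean's convention
for division by zero combined with `gᵢⱼ(0) = 0`.) -/
theorem convex_hull_nonexpanding
    (m n : ℕ)
    (v : ℝ → Fin n → EuclideanSpace ℝ (Fin m))
    (N : ℝ → Fin n → Finset (Fin n))
    (g : Fin n → Fin n → ℝ → ℝ)
    (hg0 : ∀ i j, g i j 0 = 0)
    (hgpos : ∀ i j y, 0 < y → 0 < g i j y)
    (hgC1 : ∀ i j, ContDiffOn ℝ 1 (g i j) (Set.Ici (0 : ℝ)))
    (hdyn : ∀ i t, HasDerivAt (fun s => v s i)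
      (∑ j ∈ N t i,
        (-(g i j ‖v t i - v t j‖ / ‖v t i - v t j‖)) • (v t i - v t j)) t) :
    ∀ t ≥ (0 : ℝ), ∀ δ > (0 : ℝ),
      convexHull ℝ (Set.range (v (t + δ))) ⊆ convexHull ℝ (Set.range (v t)) :=
  convex_hull_nonexpanding_general m n v N g hgpos hdyn
end

section
/- Under the velocity coordination dynamics with all states confined to an interval (Δ₁−ε, Δ₂+ε) for t ≥ t_k, and with each g_{ij} being C¹ with g_{ij}(0)=0, there exists a constant γ > 0 such that for every agent i and all t ≥ t_k, v̇_i(t) ≤ γ(Δ₂ + ε − v_i(t)). -/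
/-!
A `C¹` function on `[0, ∞)` vanishing at `0` is Lipschitz on the compact interval
`[0, Δ₂ - Δ₁ + 2ε]`, so `g y ≤ K y` there with one `K` for all (finitely many) pairs `(i, j)`.
In the sum for `v̇ᵢ`, neighbours below `vᵢ` contribute `≤ 0`, and a neighbour `vⱼ > vᵢ`
contributes at most `K (vⱼ - vᵢ) ≤ K (Δ₂ + ε - vᵢ)`; summing over at most `n` neighbours
gives `γ = n K + 1`.
-/

open Finset Set

lemma exists_le_mul_of_contDiffOn_Ici {f : ℝ → ℝ} (hf : ContDiffOn ℝ 1 f (Ici 0))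
    (hf0 : f 0 = 0) (M : ℝ) : ∃ K : ℝ, 0 ≤ K ∧ ∀ y ∈ Icc 0 M, f y ≤ K * y := by
  obtain ⟨K, hK⟩ := (hf.mono Icc_subset_Ici_self).exists_lipschitzOnWith one_ne_zero
    (convex_Icc 0 M) isCompact_Icc
  refine ⟨K, K.coe_nonneg, fun y hy => ?_⟩
  have hdist := hK.dist_le_mul y hy 0 ⟨le_rfl, hy.1.trans hy.2⟩
  rw [Real.dist_eq, Real.dist_eq, hf0, sub_zero, sub_zero, abs_of_nonneg hy.1] at hdist
  exact (le_abs_self _).trans hdist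

lemma exists_le_mul_of_forall_contDiffOn_Ici {ι : Type*} [Finite ι] {f : ι → ℝ → ℝ}
    (hf : ∀ a, ContDiffOn ℝ 1 (f a) (Ici 0)) (hf0 : ∀ a, f a 0 = 0) (M : ℝ) :
    ∃ K : ℝ, 0 ≤ K ∧ ∀ a, ∀ y ∈ Icc 0 M, f a y ≤ K * y := by
  choose K hK0 hK using fun a => exists_le_mul_of_contDiffOn_Ici (hf a) (hf0 a) M
  obtain ⟨K₀, hK₀⟩ := Finite.exists_le K
  refine ⟨max K₀ 0, le_max_right _ _, fun a y hy => (hK a y hy).trans ?_⟩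
  exact mul_le_mul_of_nonneg_right ((hK₀ a).trans (le_max_left _ _)) hy.1

lemma mul_sign_sub_le {f : ℝ → ℝ} {K a b x w : ℝ} (hf : ∀ y, 0 ≤ y → 0 ≤ f y) (hK0 : 0 ≤ K)
    (hK : ∀ y ∈ Icc 0 (b - a), f y ≤ K * y) (hx : x ∈ Ioo a b) (hw : w ∈ Ioo a b) :
    f |w - x| * Real.sign (w - x) ≤ K * (b - x) := by
  have hgap : 0 ≤ K * (b - x) := mul_nonneg hK0 (sub_nonneg.2 hx.2.le)
  rcases lt_trichotomy w x with hlt | rfl | hgt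
  · rw [Real.sign_of_neg (sub_neg.2 hlt), mul_neg_one]
    linarith [hf _ (abs_nonneg (w - x))]
  · simpa using hgap
  · have hpos : 0 < w - x := sub_pos.2 hgt
    rw [Real.sign_of_pos hpos, mul_one, abs_of_pos hpos]
    calc f (w - x) ≤ K * (w - x) := hK _ ⟨hpos.le, by linarith [hx.1, hw.2]⟩
      _ ≤ K * (b - x) := mul_le_mul_of_nonneg_left (by linarith [hw.2]) hK0

theorem drift_upper_bound_general
    (n : ℕ) (v : ℝ → Fin n → ℝ) (v' : ℝ → Fin n → ℝ)
    (N : ℝ → Fin n → Finset (Fin n))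
    (g : Fin n → Fin n → ℝ → ℝ)
    (Δ₁ Δ₂ ε t_k : ℝ)
    (hg0 : ∀ i j, g i j 0 = 0)
    (hgnonneg : ∀ i j y, 0 ≤ y → 0 ≤ g i j y)
    (hgC1 : ∀ i j, ContDiffOn ℝ 1 (g i j) (Set.Ici (0 : ℝ)))
    (hconf : ∀ i, ∀ t ≥ t_k, v t i ∈ Set.Ioo (Δ₁ - ε) (Δ₂ + ε))
    (hform : ∀ i, ∀ t ≥ t_k,
      v' t i = ∑ j ∈ N t i, g i j |v t j - v t i| * Real.sign (v t j - v t i)) :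
    ∃ γ > (0 : ℝ), ∀ i, ∀ t ≥ t_k, v' t i ≤ γ * (Δ₂ + ε - v t i) := by
  obtain ⟨K, hK0, hK⟩ := exists_le_mul_of_forall_contDiffOn_Ici (f := Function.uncurry g)
    (fun p => hgC1 p.1 p.2) (fun p => hg0 p.1 p.2) ((Δ₂ + ε) - (Δ₁ - ε))
  refine ⟨n * K + 1, by positivity, fun i t ht => ?_⟩
  have hgap : 0 ≤ Δ₂ + ε - v t i := sub_nonneg.2 (hconf i t ht).2.le
  have hterm : ∀ j ∈ N t i,
      g i j |v t j - v t i| * Real.sign (v t j - v t i) ≤ K * (Δ₂ + ε - v t i) :=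
    fun j _ => mul_sign_sub_le (hgnonneg i j) hK0 (hK (i, j)) (hconf i t ht) (hconf j t ht)
  have hcard : ((N t i).card : ℝ) ≤ n := by
    exact_mod_cast (card_le_univ (N t i)).trans_eq (Fintype.card_fin n)
  calc v' t i ≤ (N t i).card • (K * (Δ₂ + ε - v t i)) :=
        hform i t ht ▸ sum_le_card_nsmul _ _ _ hterm
    _ ≤ n * (K * (Δ₂ + ε - v t i)) := by
      rw [nsmul_eq_mul]; exact mul_le_mul_of_nonneg_right hcard (mul_nonneg hK0 hgap)
    _ ≤ (n * K + 1) * (Δ₂ + ε - v t i) := by nlinarith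

/-- Upper bound on the drift: if all states are confined to `(Δ₁−ε, Δ₂+ε)` for
`t ≥ t_k` and each `gᵢⱼ` is C¹ with `gᵢⱼ(0) = 0`, then there is `γ > 0` with
`v̇ᵢ(t) ≤ γ(Δ₂ + ε − vᵢ(t))` for every agent `i` and all `t ≥ t_k`. -/
theorem drift_upper_bound
    (n : ℕ) (v : ℝ → Fin n → ℝ) (v' : ℝ → Fin n → ℝ)
    (N : ℝ → Fin n → Finset (Fin n))
    (g : Fin n → Fin n → ℝ → ℝ)
    (Δ₁ Δ₂ ε t_k : ℝ) (hε : 0 < ε) (hΔ : Δ₁ ≤ Δ₂)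
    (hg0 : ∀ i j, g i j 0 = 0)
    (hgnonneg : ∀ i j y, 0 ≤ y → 0 ≤ g i j y)
    (hgC1 : ∀ i j, ContDiffOn ℝ 1 (g i j) (Set.Ici (0 : ℝ)))
    (hconf : ∀ i, ∀ t ≥ t_k, v t i ∈ Set.Ioo (Δ₁ - ε) (Δ₂ + ε))
    (hdyn : ∀ i, ∀ t ≥ t_k, HasDerivAt (fun s => v s i) (v' t i) t)
    (hform : ∀ i, ∀ t ≥ t_k,
      v' t i = ∑ j ∈ N t i, g i j |v t j - v t i| * Real.sign (v t j - v t i)) :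
    ∃ γ > (0 : ℝ), ∀ i, ∀ t ≥ t_k, v' t i ≤ γ * (Δ₂ + ε - v t i) :=
  drift_upper_bound_general n v v' N g Δ₁ Δ₂ ε t_k hg0 hgnonneg hgC1 hconf hform
end
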